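/- If a clustering instance is α-perturbation resilient to the min-sum objective, then for distinct optimal clusters C_i, C_j, any A ⊆ C_i and nonempty A' ⊆ C_j: α·d_sum(A, C_i\A) < (|C_j|/|A'|)·d_sum(A, A') + (|A|/|A'|)·d_sum(A', C_j\A'). -/
import Mathlib


/-- A family of `k` finsets forms a partition of `S`. -/
def IsPartition {S : Type*} {k : ℕ} (P : Fin k → Finset S) : Prop :=
  ∀ x : S, ∃! i, x ∈ P i

/-- min-sum cost of a clustering `P` under distance function `d`. -/
def msCost {S : Type*} (d : S → S → ℝ) {k : ℕ} (P : Fin k → Finset S) : ℝ :=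
  ∑ i, ∑ p ∈ P i, ∑ q ∈ P i, d p q

/-- Sum of pairwise distances between two sets. -/
def dsum {S : Type*} (d : S → S → ℝ) (A B : Finset S) : ℝ :=
  ∑ p ∈ A, ∑ q ∈ B, d p q

/-- α-perturbation resilience for min-sum: under every α-perturbation `d'` of `d`, `C` is
the unique optimal min-sum k-clustering (up to relabeling). -/
def MinsumResilient {S : Type*} (d : S → S → ℝ) (α : ℝ) {k : ℕ}
    (C : Fin k → Finset S) : Prop :=
  ∀ d' : S → S → ℝ, (∀ p q : S, d p q ≤ d' p q ∧ d' p q ≤ α * d p q) →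
    IsPartition C ∧ ∀ Q : Fin k → Finset S, IsPartition Q →
      (∃ σ : Equiv.Perm (Fin k), ∀ i, Q i = C (σ i)) ∨ msCost d' C < msCost d' Q

/- ============ auxiliary lemmas ============ -/

lemma dsum_congr {S : Type*} {f g : S → S → ℝ} {A B : Finset S}
    (h : ∀ p ∈ A, ∀ q ∈ B, f p q = g p q) : dsum f A B = dsum g A B :=
  Finset.sum_congr rfl fun p hp => Finset.sum_congr rfl fun q hq => h p hp q hq

lemma dsum_union_left {S : Type*} [DecidableEq S] (f : S → S → ℝ) (X Y Z : Finset S)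
    (h : Disjoint X Y) : dsum f (X ∪ Y) Z = dsum f X Z + dsum f Y Z :=
  Finset.sum_union h

lemma dsum_union_right {S : Type*} [DecidableEq S] (f : S → S → ℝ) (X Y Z : Finset S)
    (h : Disjoint Y Z) : dsum f X (Y ∪ Z) = dsum f X Y + dsum f X Z := by
  unfold dsum
  rw [← Finset.sum_add_distrib]
  exact Finset.sum_congr rfl fun p _ => Finset.sum_union h

lemma dsum_smul {S : Type*} (α : ℝ) (f : S → S → ℝ) (A B : Finset S) :
    dsum (fun p q => α * f p q) A B = α * dsum f A B := by
  simp [dsum, Finset.mul_sum]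

lemma dsum_comm {S : Type*} [MetricSpace S] (A B : Finset S) :
    dsum dist A B = dsum dist B A := by
  unfold dsum
  rw [Finset.sum_comm]
  simp [dist_comm]

lemma sum_two_ite {k : ℕ} {i j : Fin k} (h : i ≠ j) (a b : ℝ) :
    ∑ l : Fin k, (if l = i then a else if l = j then b else 0) = a + b := by
  have : ∀ l : Fin k, (if l = i then a else if l = j then b else 0)
      = (if l = i then a else 0) + (if l = j then b else 0) := by
    intro l
    by_cases h1 : l = i
    · subst h1; simp [h]
    · by_cases h2 : l = j <;> simp [h1, h2, Ne.symm h]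
  simp only [this, Finset.sum_add_distrib, Finset.sum_ite_eq' Finset.univ,
    Finset.mem_univ, if_true]

/-- Triangle-inequality averaging bound. -/
lemma dsum_triangle {S : Type*} [MetricSpace S] (A A' B : Finset S) :
    (A'.card : ℝ) * dsum dist A B ≤
      (B.card : ℝ) * dsum dist A A' + (A.card : ℝ) * dsum dist A' B := by
  have key : ∀ q' ∈ A', dsum dist A B ≤
      (B.card : ℝ) * (∑ p ∈ A, dist p q') + (A.card : ℝ) * (∑ q ∈ B, dist q' q) := by
    intro q' _
    have h1 : dsum dist A B ≤ ∑ p ∈ A, ∑ q ∈ B, (dist p q' + dist q' q) :=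
      Finset.sum_le_sum fun p _ => Finset.sum_le_sum fun q _ => dist_triangle p q' q
    calc dsum dist A B ≤ ∑ p ∈ A, ∑ q ∈ B, (dist p q' + dist q' q) := h1
      _ = (B.card : ℝ) * (∑ p ∈ A, dist p q') + (A.card : ℝ) * (∑ q ∈ B, dist q' q) := by
          simp only [Finset.sum_add_distrib, Finset.sum_const, nsmul_eq_mul]
          rw [← Finset.mul_sum]
  calc (A'.card : ℝ) * dsum dist A B = ∑ _q' ∈ A', dsum dist A B := by
        rw [Finset.sum_const, nsmul_eq_mul]
    _ ≤ ∑ q' ∈ A', ((B.card : ℝ) * (∑ p ∈ A, dist p q') + (A.card : ℝ) * (∑ q ∈ B, dist q' q)) :=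
        Finset.sum_le_sum key
    _ = (B.card : ℝ) * dsum dist A A' + (A.card : ℝ) * dsum dist A' B := by
        rw [Finset.sum_add_distrib, ← Finset.mul_sum, ← Finset.mul_sum]
        congr 1
        · congr 1
          unfold dsum
          exact Finset.sum_comm

/-- for distinct optimal clusters C_i, C_j, nonempty A ⊆ C_i and nonempty
A' ⊆ C_j: α·d_sum(A, C_i\A) < (|C_j|/|A'|)·d_sum(A, A') + (|A|/|A'|)·d_sum(A', C_j\A'). -/
theorem stmt12 {S : Type*} [MetricSpace S] [Fintype S] [DecidableEq S] {k : ℕ} {α : ℝ}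
    (hα : 1 ≤ α) (C : Fin k → Finset S) (hne : ∀ i, (C i).Nonempty)
    (hres : MinsumResilient dist α C) :
    ∀ i j : Fin k, i ≠ j → ∀ A ⊆ C i, A.Nonempty → ∀ A' ⊆ C j, A'.Nonempty →
      α * dsum dist A (C i \ A) <
        (((C j).card : ℝ) / (A'.card : ℝ)) * dsum dist A A' +
        ((A.card : ℝ) / (A'.card : ℝ)) * dsum dist A' (C j \ A') := by
  intro i j hij A hA hAne A' hA' hA'ne
  classical
  -- the perturbed distance
  set B := C i \ A with hB
  set d' : S → S → ℝ := fun p q =>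
    if (p ∈ A ∧ q ∈ B) ∨ (q ∈ A ∧ p ∈ B) then α * dist p q else dist p q with hd'def
  have hd' : ∀ p q : S, dist p q ≤ d' p q ∧ d' p q ≤ α * dist p q := by
    intro p q
    simp only [hd'def]
    split_ifs
    · exact ⟨le_mul_of_one_le_left dist_nonneg hα, le_refl _⟩
    · exact ⟨le_refl _, le_mul_of_one_le_left dist_nonneg hα⟩
  obtain ⟨hP, hopt⟩ := hres d' hd'
  -- clusters are pairwise disjoint
  have hdisj : ∀ l m : Fin k, l ≠ m → Disjoint (C l) (C m) := by
    intro l m hlm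
    rw [Finset.disjoint_left]
    intro x hxl hxm
    obtain ⟨n, _, hn⟩ := hP x
    exact hlm ((hn l hxl).trans (hn m hxm).symm)
  have hABdisj : Disjoint A B := Finset.disjoint_sdiff
  have hCjA : Disjoint (C j) A :=
    Finset.disjoint_of_subset_right hA (hdisj j i hij.symm)
  have hAnotCj : ∀ x ∈ A, x ∉ C j := fun x hx => Finset.disjoint_right.1 hCjA hx
  have hBnotCj : ∀ x ∈ C j, x ∉ B := by
    intro x hx hxB
    exact Finset.disjoint_left.1 (hdisj j i hij.symm) hx (Finset.mem_sdiff.1 hxB).1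
  have hAnotB : ∀ x ∈ A, x ∉ B := fun x hx => Finset.disjoint_left.1 hABdisj hx
  have hBnotA : ∀ x ∈ B, x ∉ A := fun x hx => (Finset.mem_sdiff.1 hx).2
  -- the competing clustering Q
  set Q : Fin k → Finset S := fun l =>
    if l = i then B else if l = j then C j ∪ A else C l with hQdef
  have hQpart : IsPartition Q := by
    intro x
    obtain ⟨l, hl, hul⟩ := hP x
    by_cases hx : x ∈ A
    · refine ⟨j, ?_, ?_⟩
      · simp only [hQdef, if_neg hij.symm, if_pos rfl]
        exact Finset.mem_union_right _ hx
      · intro m hm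
        simp only [hQdef] at hm
        split_ifs at hm with h1 h2
        · exact absurd hm (hAnotB x hx)
        · exact h2
        · exact absurd ((hul m hm).trans (hul i (hA hx)).symm) h1
    · refine ⟨l, ?_, ?_⟩
      · simp only [hQdef]
        split_ifs with h1 h2
        · subst h1; exact Finset.mem_sdiff.2 ⟨hl, hx⟩
        · subst h2; exact Finset.mem_union_left _ hl
        · exact hl
      · intro m hm
        simp only [hQdef] at hm
        split_ifs at hm with h1 h2
        · exact h1.trans (hul i (Finset.mem_sdiff.1 hm).1)
        · rcases Finset.mem_union.1 hm with h | h
          · exact h2.trans (hul j h)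
          · exact absurd h hx
        · exact hul m hm
  -- rule out the permutation case
  have hcost : msCost d' C < msCost d' Q := by
    rcases hopt Q hQpart with ⟨σ, hσ⟩ | h
    · exfalso
      have hQi : Q i = B := by simp [hQdef]
      have hCsub : C (σ i) ⊆ C i := by
        rw [← hσ i, hQi]; exact Finset.sdiff_subset
      have hσi : σ i = i := by
        by_contra hne'
        obtain ⟨x, hx⟩ := hne (σ i)
        exact Finset.disjoint_left.1 (hdisj (σ i) i hne') hx (hCsub hx)
      obtain ⟨a, ha⟩ := hAne
      have : a ∈ B := by
        rw [← hQi, hσ i, hσi]; exact hA ha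
      exact hBnotA a this ha
    · exact h
  -- evaluate the two costs
  have hCi : C i = A ∪ B := (Finset.union_sdiff_of_subset hA).symm
  -- d' agreement lemmas
  have eAA : dsum d' A A = dsum dist A A := dsum_congr fun p hp q hq => by
    simp only [hd'def]
    rw [if_neg]
    rintro (⟨_, h⟩ | ⟨_, h⟩)
    · exact hAnotB q hq h
    · exact hAnotB p hp h
  have eAB : dsum d' A B = α * dsum dist A B := by
    rw [← dsum_smul α dist A B]
    exact dsum_congr fun p hp q hq => by
      simp only [hd'def]; rw [if_pos (Or.inl ⟨hp, hq⟩)]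
  have eBA : dsum d' B A = α * dsum dist B A := by
    rw [← dsum_smul α dist B A]
    exact dsum_congr fun p hp q hq => by
      simp only [hd'def]; rw [if_pos (Or.inr ⟨hq, hp⟩)]
  have eBB : dsum d' B B = dsum dist B B := dsum_congr fun p hp q hq => by
    simp only [hd'def]
    rw [if_neg]
    rintro (⟨h, _⟩ | ⟨h, _⟩)
    · exact hBnotA p hp h
    · exact hBnotA q hq h
  have eJJ : dsum d' (C j) (C j) = dsum dist (C j) (C j) := dsum_congr fun p hp q hq => by
    simp only [hd'def]
    rw [if_neg]
    rintro (⟨h, _⟩ | ⟨h, _⟩)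
    · exact hAnotCj p h hp
    · exact hAnotCj q h hq
  have eJA : dsum d' (C j) A = dsum dist (C j) A := dsum_congr fun p hp q hq => by
    simp only [hd'def]
    rw [if_neg]
    rintro (⟨h, _⟩ | ⟨_, h⟩)
    · exact hAnotCj p h hp
    · exact hBnotCj p hp h
  have eAJ : dsum d' A (C j) = dsum dist A (C j) := dsum_congr fun p hp q hq => by
    simp only [hd'def]
    rw [if_neg]
    rintro (⟨_, h⟩ | ⟨h, _⟩)
    · exact hBnotCj q hq h
    · exact hAnotCj q h hq
  -- msCost as sums of dsum
  have hmsC : ∀ (P : Fin k → Finset S), msCost d' P = ∑ l, dsum d' (P l) (P l) := fun P => rfl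
  have hQcost : msCost d' Q = msCost d' C
      + (dsum d' B B - dsum d' (C i) (C i))
      + (dsum d' (C j ∪ A) (C j ∪ A) - dsum d' (C j) (C j)) := by
    rw [hmsC Q, hmsC C]
    have : ∀ l : Fin k, dsum d' (Q l) (Q l) = dsum d' (C l) (C l)
        + (if l = i then dsum d' B B - dsum d' (C i) (C i)
           else if l = j then dsum d' (C j ∪ A) (C j ∪ A) - dsum d' (C j) (C j) else 0) := by
      intro l
      by_cases h1 : l = i
      · subst h1; simp [hQdef, hij]
      · by_cases h2 : l = j
        · subst h2; simp [hQdef, h1]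
        · simp [hQdef, h1, h2]
    rw [Finset.sum_congr rfl fun l _ => this l, Finset.sum_add_distrib, sum_two_ite hij]
    ring
  have hFCi : dsum d' (C i) (C i) =
      dsum d' A A + dsum d' A B + dsum d' B A + dsum d' B B := by
    rw [hCi, dsum_union_left _ _ _ _ hABdisj, dsum_union_right _ _ _ _ hABdisj,
      dsum_union_right _ _ _ _ hABdisj]
    ring
  have hCjA' : Disjoint (C j) A := hCjA
  have hFCjA : dsum d' (C j ∪ A) (C j ∪ A) =
      dsum d' (C j) (C j) + dsum d' (C j) A + dsum d' A (C j) + dsum d' A A := by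
    rw [dsum_union_left _ _ _ _ hCjA', dsum_union_right _ _ _ _ hCjA',
      dsum_union_right _ _ _ _ hCjA']
    ring
  -- the key strict inequality: α · dsum A B < dsum A (C j)
  have hkey : α * dsum dist A B < dsum dist A (C j) := by
    rw [hQcost, hFCi, hFCjA] at hcost
    rw [eAA, eAB, eBA, eBB, eJJ, eJA, eAJ] at hcost
    have hc1 : dsum dist B A = dsum dist A B := dsum_comm B A
    have hc2 : dsum dist (C j) A = dsum dist A (C j) := dsum_comm (C j) A
    rw [hc1, hc2] at hcost
    linarith
  -- triangle-inequality step
  set B' := C j \ A' with hB'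
  have hsplit : dsum dist A (C j) = dsum dist A A' + dsum dist A B' := by
    rw [show C j = A' ∪ B' from (Finset.union_sdiff_of_subset hA').symm,
      dsum_union_right _ _ _ _ Finset.disjoint_sdiff]
  have htri := dsum_triangle A A' B'
  have hcard : (B'.card : ℝ) = (C j).card - A'.card := by
    rw [hB', Finset.card_sdiff_of_subset hA']
    have := Finset.card_le_card hA'
    push_cast [Nat.cast_sub this]
    ring
  have hn' : (0:ℝ) < A'.card := by exact_mod_cast Finset.card_pos.2 hA'ne
  rw [div_mul_eq_mul_div, div_mul_eq_mul_div, ← add_div, lt_div_iff₀ hn']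
  have h1 : α * dsum dist A B < dsum dist A A' + dsum dist A B' := by
    rw [← hsplit]; exact hkey
  have h1n := mul_lt_mul_of_pos_right h1 hn'
  rw [hcard] at htri
  nlinarith [htri, h1n]
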